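/- Suppose γₙ → γ and γ̃ₙ → γ̃ in (C_f, ψ), with γₙ(T(γₙ)) = γ̃ₙ(0) and γ(T(γ)) = γ̃(0) so that all concatenations are defined. Then the concatenations γₙ ⊕ γ̃ₙ converge to γ ⊕ γ̃ in (C_f, ψ). -/

import Mathlib

open Filter Set

noncomputable section

/-- A finite-duration parameterized curve in `ℝ³`: a continuous function together with
its duration `T ≥ 0` (only the values on `[0, T]` are relevant). -/
structure FiniteCurve where
  T : ℝ
  hT : 0 ≤ T
  toFun : ℝ → EuclideanSpace ℝ (Fin 3)
  cont : Continuous toFun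

/-- The metric `ψ` on the space `C_f` of finite parameterized curves:
`ψ(γ₁,γ₂) = |T₁ − T₂| + max_{0 ≤ s ≤ 1} |γ₁(sT₁) − γ₂(sT₂)|`. -/
noncomputable def psiDist (γ₁ γ₂ : FiniteCurve) : ℝ :=
  |γ₁.T - γ₂.T| +
    ⨆ s : Set.Icc (0 : ℝ) 1, dist (γ₁.toFun ((s : ℝ) * γ₁.T)) (γ₂.toFun ((s : ℝ) * γ₂.T))

/-- The concatenation `γ₁ ⊕ γ₂` of two finite curves with `γ₁(T₁) = γ₂(0)`:
equal to `γ₁(t)` for `t ≤ T₁` and to `γ₂(t − T₁)` afterwards; it has duration `T₁ + T₂`. -/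
noncomputable def FiniteCurve.concat (γ₁ γ₂ : FiniteCurve)
    (h : γ₁.toFun γ₁.T = γ₂.toFun 0) : FiniteCurve where
  T := γ₁.T + γ₂.T
  hT := add_nonneg γ₁.hT γ₂.hT
  toFun := fun t => if t ≤ γ₁.T then γ₁.toFun t else γ₂.toFun (t - γ₁.T)
  cont := by
    refine Continuous.if_le γ₁.cont (γ₂.cont.comp (continuous_id.sub continuous_const))
      continuous_id continuous_const ?_
    intro t ht
    rw [ht, sub_self]
    exact h

/-! Extend every curve `γ` to a map `γ̂ : ℝ → ℝ³` that is constant outside `[0, T]`.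
Convergence in `ψ` is equivalent to convergence of the durations together with uniform
convergence of the extensions on `ℝ`: the extension of the limit curve is uniformly continuous,
which absorbs the mismatch between the parametrizations `s Tₙ` and `s T`. The extension of
`γ₁ ⊕ γ₂` is `t ↦ γ̂₁ t + γ̂₂ (t - T₁) - γ₂ 0`, and each term of this formula converges
uniformly. -/

open Topology

theorem TendstoUniformly.comp_tendstoUniformly {ι α β γ : Type*} [UniformSpace β]
    [UniformSpace γ] {l : Filter ι} {F : ι → β → γ} {f : β → γ} {G : ι → α → β} {g : α → β}
    (hF : TendstoUniformly F f l) (hf : UniformContinuous f) (hG : TendstoUniformly G g l) :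
    TendstoUniformly (fun n x => F n (G n x)) (fun x => f (g x)) l := by
  intro u hu
  obtain ⟨v, hv, hvu⟩ := comp_mem_uniformity_sets hu
  filter_upwards [hf.comp_tendstoUniformly hG v hv, hF v hv] with n hfG hFf x
  exact hvu ⟨f (G n x), hfG x, hFf (G n x)⟩

theorem tendstoUniformly_sub_const {ι E : Type*} [SeminormedAddCommGroup E] {l : Filter ι}
    {c : ι → E} {c₀ : E} (hc : Tendsto c l (𝓝 c₀)) :
    TendstoUniformly (fun n (t : E) => t - c n) (· - c₀) l :=
  Metric.tendstoUniformly_iff.2 fun ε hε =>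
    (Metric.tendsto_nhds.1 hc ε hε).mono fun n hn t => by rwa [dist_sub_left, dist_comm]

theorem abs_projIcc_sub_projIcc_le {α : Type*} [AddCommGroup α] [LinearOrder α]
    [IsOrderedAddMonoid α] {a b c : α} (hb : a ≤ b) (hc : a ≤ c) (t : α) :
    |(projIcc a b hb t : α) - projIcc a c hc t| ≤ |b - c| := by
  simp only [projIcc]
  calc |max a (min b t) - max a (min c t)| ≤ |min b t - min c t| := by
        simpa using abs_max_sub_max_le_max a (min b t) a (min c t)
    _ ≤ |b - c| := by simpa using abs_min_sub_min_le_max b t c t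

theorem exists_mem_Icc_mul_eq {K : Type*} [Field K] [LinearOrder K] [IsStrictOrderedRing K]
    {T t : K} (ht : t ∈ Icc 0 T) : ∃ s ∈ Icc (0 : K) 1, s * T = t := by
  rcases ht.1.trans ht.2 |>.eq_or_lt with hT | hT
  · exact ⟨0, left_mem_Icc.2 zero_le_one, by rw [zero_mul]; linarith [ht.1, ht.2]⟩
  · exact ⟨t / T, ⟨div_nonneg ht.1 hT.le, div_le_one_of_le₀ ht.2 hT.le⟩, div_mul_cancel₀ t hT.ne'⟩

namespace FiniteCurve

def extend (γ : FiniteCurve) (t : ℝ) : EuclideanSpace ℝ (Fin 3) :=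
  γ.toFun (projIcc 0 γ.T γ.hT t)

theorem extend_of_mem (γ : FiniteCurve) {t : ℝ} (ht : t ∈ Icc 0 γ.T) :
    γ.extend t = γ.toFun t := by
  rw [extend, projIcc_of_mem _ ht]

theorem mul_T_mem_Icc (γ : FiniteCurve) {s : ℝ} (hs : s ∈ Icc (0 : ℝ) 1) : s * γ.T ∈ Icc 0 γ.T :=
  ⟨mul_nonneg hs.1 γ.hT, mul_le_of_le_one_left γ.hT hs.2⟩

theorem extend_projIcc (γ : FiniteCurve) (t : ℝ) :
    γ.extend (projIcc 0 γ.T γ.hT t) = γ.extend t := by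
  rw [extend, projIcc_val]; rfl

theorem uniformContinuous_extend (γ : FiniteCurve) : UniformContinuous γ.extend :=
  (CompactSpace.uniformContinuous_of_continuous (γ.cont.comp continuous_subtype_val)).comp
    (LipschitzWith.projIcc γ.hT).uniformContinuous

theorem concat_T (γ₁ γ₂ : FiniteCurve) (h : γ₁.toFun γ₁.T = γ₂.toFun 0) :
    (γ₁.concat γ₂ h).T = γ₁.T + γ₂.T :=
  rfl

theorem extend_concat (γ₁ γ₂ : FiniteCurve) (h : γ₁.toFun γ₁.T = γ₂.toFun 0) :
    (γ₁.concat γ₂ h).extend = fun t => γ₁.extend t + γ₂.extend (t - γ₁.T) - γ₂.extend 0 := by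
  funext t
  have h₁ := γ₁.hT
  have h₂ := γ₂.hT
  rw [γ₂.extend_of_mem (left_mem_Icc.2 h₂)]
  simp only [extend, concat, projIcc]
  rcases le_or_gt t γ₁.T with ht | ht
  · have hu : max 0 (min (γ₁.T + γ₂.T) t) = max 0 (min γ₁.T t) := by
      rw [min_eq_right (by linarith), min_eq_right ht]
    have hv : max 0 (min γ₂.T (t - γ₁.T)) = 0 := max_eq_left (min_le_of_right_le (by linarith))
    rw [hu, hv, if_pos (max_le h₁ (min_le_left _ _)), add_sub_cancel_right]
  · have hu : max 0 (min (γ₁.T + γ₂.T) t) - γ₁.T = max 0 (min γ₂.T (t - γ₁.T)) := by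
      rw [max_eq_right (le_min (by linarith) (by linarith)), max_eq_right (le_min h₂ (by linarith)),
        ← min_sub_sub_right, add_sub_cancel_left]
    rw [min_eq_left ht.le, max_eq_right h₁, h, add_sub_cancel_left, ← hu]
    split_ifs with hle
    · -- the junction point, reachable here only when `γ₂.T = 0`
      have hT : γ₁.T ≤ max 0 (min (γ₁.T + γ₂.T) t) :=
        le_max_of_le_right (le_min (by linarith) ht.le)
      rw [le_antisymm hle hT, sub_self, h]
    · rfl

end FiniteCurve

theorem psiDist_nonneg (γ₁ γ₂ : FiniteCurve) : 0 ≤ psiDist γ₁ γ₂ :=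
  add_nonneg (abs_nonneg _) (Real.iSup_nonneg fun _ => dist_nonneg)

theorem abs_T_sub_le_psiDist (γ₁ γ₂ : FiniteCurve) : |γ₁.T - γ₂.T| ≤ psiDist γ₁ γ₂ :=
  le_add_of_nonneg_right (Real.iSup_nonneg fun _ => dist_nonneg)

theorem dist_le_psiDist (γ₁ γ₂ : FiniteCurve) {s : ℝ} (hs : s ∈ Icc (0 : ℝ) 1) :
    dist (γ₁.toFun (s * γ₁.T)) (γ₂.toFun (s * γ₂.T)) ≤ psiDist γ₁ γ₂ := by
  have hbdd : BddAbove (range fun s : Icc (0 : ℝ) 1 =>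
      dist (γ₁.toFun (s * γ₁.T)) (γ₂.toFun (s * γ₂.T))) :=
    (isCompact_range ((γ₁.cont.comp (continuous_subtype_val.mul continuous_const)).dist
      (γ₂.cont.comp (continuous_subtype_val.mul continuous_const)))).bddAbove
  exact le_add_of_nonneg_of_le (abs_nonneg _) (le_ciSup hbdd ⟨s, hs⟩)

theorem psiDist_le (γ₁ γ₂ : FiniteCurve) {a b : ℝ} (hT : |γ₁.T - γ₂.T| ≤ a)
    (h : ∀ s ∈ Icc (0 : ℝ) 1, dist (γ₁.toFun (s * γ₁.T)) (γ₂.toFun (s * γ₂.T)) ≤ b) :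
    psiDist γ₁ γ₂ ≤ a + b :=
  add_le_add hT <| Real.iSup_le (fun s => h s s.2) <|
    dist_nonneg.trans (h 0 (left_mem_Icc.2 zero_le_one))

theorem exists_dist_extend_le_psiDist (γ₁ γ₂ : FiniteCurve) (t : ℝ) :
    ∃ u, |u - (projIcc 0 γ₂.T γ₂.hT t : ℝ)| ≤ 2 * |γ₁.T - γ₂.T| ∧
      dist (γ₁.extend t) (γ₂.extend u) ≤ psiDist γ₁ γ₂ := by
  obtain ⟨s, hs, hsT⟩ := exists_mem_Icc_mul_eq (projIcc 0 γ₁.T γ₁.hT t).2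
  refine ⟨s * γ₂.T, ?_, ?_⟩
  · calc |s * γ₂.T - (projIcc 0 γ₂.T γ₂.hT t : ℝ)|
          = |s * (γ₂.T - γ₁.T) + ((projIcc 0 γ₁.T γ₁.hT t : ℝ) - projIcc 0 γ₂.T γ₂.hT t)| := by
            rw [← hsT]; ring_nf
      _ ≤ |γ₁.T - γ₂.T| + |γ₁.T - γ₂.T| := by
          refine (abs_add_le _ _).trans (add_le_add ?_ (abs_projIcc_sub_projIcc_le _ _ t))
          rw [abs_mul, abs_of_nonneg hs.1, abs_sub_comm]
          exact mul_le_of_le_one_left (abs_nonneg _) hs.2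
      _ = 2 * |γ₁.T - γ₂.T| := by ring
  · rw [FiniteCurve.extend, ← hsT, γ₂.extend_of_mem (γ₂.mul_T_mem_Icc hs)]
    exact dist_le_psiDist γ₁ γ₂ hs

section Convergence

variable {ι : Type*} {l : Filter ι} {γn : ι → FiniteCurve} {γ : FiniteCurve}

theorem tendstoUniformly_extend_of_tendsto_psiDist
    (h : Tendsto (fun n => psiDist (γn n) γ) l (𝓝 0)) :
    TendstoUniformly (fun n => (γn n).extend) γ.extend l := by
  rw [Metric.tendstoUniformly_iff]
  intro ε hε
  obtain ⟨δ, hδ, hγ⟩ := Metric.uniformContinuous_iff.1 γ.uniformContinuous_extend (ε / 2)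
    (half_pos hε)
  filter_upwards [h.eventually_lt_const (lt_min (half_pos hε) (half_pos hδ))] with n hn t
  obtain ⟨u, hu, hdist⟩ := exists_dist_extend_le_psiDist (γn n) γ t
  have hT := (abs_T_sub_le_psiDist _ _).trans_lt (hn.trans_le (min_le_right _ _))
  calc dist (γ.extend t) ((γn n).extend t)
      ≤ dist (γ.extend t) (γ.extend u) + dist (γ.extend u) ((γn n).extend t) :=
        dist_triangle _ _ _
    _ < ε / 2 + ε / 2 := by
        refine add_lt_add ?_ ?_
        · rw [← γ.extend_projIcc t]
          exact hγ (by rw [Real.dist_eq, abs_sub_comm]; linarith)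
        · rw [dist_comm]
          exact hdist.trans_lt (hn.trans_le (min_le_left _ _))
    _ = ε := add_halves ε

theorem tendsto_psiDist_of_tendstoUniformly (hT : Tendsto (fun n => (γn n).T) l (𝓝 γ.T))
    (hu : TendstoUniformly (fun n => (γn n).extend) γ.extend l) :
    Tendsto (fun n => psiDist (γn n) γ) l (𝓝 0) := by
  rw [Metric.tendsto_nhds]
  intro ε hε
  obtain ⟨δ, hδ, hγ⟩ := Metric.uniformContinuous_iff.1 γ.uniformContinuous_extend (ε / 4)
    (by positivity)
  filter_upwards [Metric.tendstoUniformly_iff.1 hu (ε / 4) (by positivity),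
    Metric.tendsto_nhds.1 hT (min δ (ε / 4)) (lt_min hδ (by positivity))] with n hun hTn
  rw [Real.dist_eq] at hTn
  rw [Real.dist_0_eq_abs, abs_of_nonneg (psiDist_nonneg _ _)]
  refine (psiDist_le _ _ (hTn.le.trans (min_le_right _ _)) fun s hs => ?_).trans_lt
    (show ε / 4 + (ε / 4 + ε / 4) < ε by linarith)
  rw [← (γn n).extend_of_mem ((γn n).mul_T_mem_Icc hs), ← γ.extend_of_mem (γ.mul_T_mem_Icc hs)]
  refine (dist_triangle _ (γ.extend (s * (γn n).T)) _).trans (add_le_add ?_ ?_)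
  · rw [dist_comm]
    exact (hun _).le
  · refine (hγ ?_).le
    rw [Real.dist_eq, ← mul_sub, abs_mul, abs_of_nonneg hs.1]
    exact (mul_le_of_le_one_left (abs_nonneg _) hs.2).trans_lt (hTn.trans_le (min_le_left _ _))

theorem tendsto_psiDist_iff :
    Tendsto (fun n => psiDist (γn n) γ) l (𝓝 0) ↔
      Tendsto (fun n => (γn n).T) l (𝓝 γ.T) ∧
        TendstoUniformly (fun n => (γn n).extend) γ.extend l := by
  refine ⟨fun h => ⟨?_, tendstoUniformly_extend_of_tendsto_psiDist h⟩,
    fun h => tendsto_psiDist_of_tendstoUniformly h.1 h.2⟩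
  rw [tendsto_iff_dist_tendsto_zero]
  exact squeeze_zero (fun _ => dist_nonneg) (fun _ => abs_T_sub_le_psiDist _ _) h

end Convergence

/-- If `γₙ → γ` and `γ̃ₙ → γ̃` in `(C_f, ψ)`, with all concatenations defined,
then `γₙ ⊕ γ̃ₙ → γ ⊕ γ̃` in `(C_f, ψ)`. -/
theorem psi_tendsto_concat (γn γn' : ℕ → FiniteCurve) (γ γ' : FiniteCurve)
    (hn : ∀ n, (γn n).toFun (γn n).T = (γn' n).toFun 0)
    (hlim : γ.toFun γ.T = γ'.toFun 0)
    (h : Tendsto (fun n => psiDist (γn n) γ) atTop (nhds 0))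
    (h' : Tendsto (fun n => psiDist (γn' n) γ') atTop (nhds 0)) :
    Tendsto (fun n => psiDist ((γn n).concat (γn' n) (hn n)) (γ.concat γ' hlim))
      atTop (nhds 0) := by
  rw [tendsto_psiDist_iff] at h h' ⊢
  simp only [FiniteCurve.concat_T, FiniteCurve.extend_concat]
  exact ⟨h.1.add h'.1, (h.2.fun_add (h'.2.comp_tendstoUniformly γ'.uniformContinuous_extend
    (tendstoUniformly_sub_const h.1))).fun_sub (h'.2.tendsto_at 0).tendstoUniformly_const⟩
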